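/- In the setting of the warped product (M_1×M_2, g^f, Π^μ), the sectional contravariant curvature 𝒦 of (g^f,Π^μ) satisfies, for 1-forms α_i,β_i on M_i: (1) 𝒦(α_1^h,β_1^h) = 𝒦_1(α_1,β_1)^h; (2) 𝒦(α_1^h,β_2^v) = (g_1²(dμ,α_1)/(4f²‖α_1‖_1²))^h (‖J_2β_2‖_2²/‖β_2‖_2²)^v + (g_1²(J_1df,α_1)/(4f²‖α_1‖_1²) + g_1(𝒟^1_{α_1}(J_1df),α_1)/(2f‖α_1‖_1²))^h; (3) 𝒦(α_2^v,β_2^v) = (μ²/f)^h 𝒦_2(α_2,β_2)^v − (‖dμ‖_1²/4f²)^h (3Π_2²(α_2,β_2)/(‖α_2‖_2²‖β_2‖_2² − g_2²(α_2,β_2)))^v − (‖J_1df‖_1²/4f²)^h + (g_1(dμ,J_1df)/2f²)^h (Π_2(α_2,β_2)g_2(α_2,β_2)/(‖α_2‖_2²‖β_2‖_2² − g_2²(α_2,β_2)))^v, where 𝒦_1, 𝒦_2 are the sectional contravariant curvatures of (g_1,Π_1), (g_2,Π_2). -/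

import Mathlib

/-!
Horizontal and vertical lifts span the 1-forms of `M₁ × M₂`, so everything is computed on
lifts. The Koszul bracket of lifts is obtained by reducing to exact forms, and the Koszul
formula then gives the Levi-Civita connection of `(g^f, Π^μ)` on lifts in terms of `D¹`, `D²`,
`J₁ df` and `dμ`. As `g^f` need not be nondegenerate, the connection is only known through
its pairings `g^f (D_θ η)`, and metric compatibility shows that these depend on `η` only
through `g^f η`. Expanding `g^f (ℛ(θ,η)η, θ)` with these formulas and dividing by the area
term gives the three sectional curvatures.
-/

namespace WarpedPoissonStmt


/-! ### An algebraic model of contravariant Poisson calculus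

`R` plays the role of the algebra of smooth functions `C^∞(M)`, `Ω` plays the
role of the `R`-module of differential 1-forms `Γ(T^*M)`, `d : R →+ Ω` is the
differential (an additive map satisfying the Leibniz rule), and a bivector
field is an alternating `R`-bilinear form `P : Ω →ₗ[R] Ω →ₗ[R] R`. -/

variable {R : Type*} [CommRing R] {Ω : Type*} [AddCommGroup Ω] [Module R Ω]

/-- The action `♯_P(α)(φ) = P(α, dφ)` of the anchor map of the bivector field
`P` on functions. -/
def anchorFun (P : Ω →ₗ[R] Ω →ₗ[R] R) (d : R →+ Ω) (α : Ω) (φ : R) : R :=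
  P α (d φ)

/-- The Leibniz rule for the differential `d`. -/
def IsDifferential (d : R →+ Ω) : Prop :=
  ∀ φ ψ : R, d (φ * ψ) = φ • d ψ + ψ • d φ

/-- A bivector field is alternating. -/
def IsBivector (P : Ω →ₗ[R] Ω →ₗ[R] R) : Prop :=
  ∀ α : Ω, P α α = 0

/-- A cometric is symmetric. -/
def IsCometric (g : Ω →ₗ[R] Ω →ₗ[R] R) : Prop :=
  ∀ α β : Ω, g α β = g β α

/-- `μ` is a Casimir function of `P`: its Hamiltonian vector field `♯_P(dμ)`
vanishes, i.e. `P(dμ, β) = 0` for every 1-form `β`. -/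
def IsCasimir (P : Ω →ₗ[R] Ω →ₗ[R] R) (d : R →+ Ω) (μ : R) : Prop :=
  ∀ β : Ω, P (d μ) β = 0

/-- Axioms of a contravariant connection `D` with respect to the bivector
field `P` : `ℝ`-bilinear (here: additive), `C^∞(M)`-linear in the first
argument and a derivation in the second one. -/
structure IsContravariantConnection (P : Ω →ₗ[R] Ω →ₗ[R] R) (d : R →+ Ω)
    (D : Ω → Ω → Ω) : Prop where
  add_left : ∀ α β γ : Ω, D (α + β) γ = D α γ + D β γ
  smul_left : ∀ (φ : R) (α β : Ω), D (φ • α) β = φ • D α β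
  add_right : ∀ α β γ : Ω, D α (β + γ) = D α β + D α γ
  smul_right : ∀ (φ : R) (α β : Ω), D α (φ • β) = φ • D α β + anchorFun P d α φ • β

/-- Axioms characterizing the Koszul bracket
`[α,β]_P = L_{♯_P(α)}β − L_{♯_P(β)}α − d(P(α,β))` of 1-forms. -/
structure IsKoszulBracket (P : Ω →ₗ[R] Ω →ₗ[R] R) (d : R →+ Ω)
    (K : Ω → Ω → Ω) : Prop where
  skew : ∀ α β : Ω, K α β = -K β α
  add_left : ∀ α β γ : Ω, K (α + β) γ = K α γ + K β γ
  exact_exact : ∀ φ ψ : R, K (d φ) (d ψ) = d (P (d φ) (d ψ))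
  leibniz : ∀ (α β : Ω) (φ : R), K α (φ • β) = φ • K α β + anchorFun P d α φ • β

/-- The Levi-Civita contravariant connection associated with the pair
`(g, P)`: the unique torsion-free contravariant connection for which the
cometric `g` is parallel. -/
structure IsLeviCivita (g P : Ω →ₗ[R] Ω →ₗ[R] R) (d : R →+ Ω)
    (K D : Ω → Ω → Ω) : Prop where
  conn : IsContravariantConnection P d D
  koszul : IsKoszulBracket P d K
  torsion_free : ∀ α β : Ω, D α β - D β α = K α β
  metric : ∀ α β γ : Ω, anchorFun P d α (g β γ) = g (D α β) γ + g β (D α γ)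

/-- `P` is a Poisson tensor: the bracket `{φ,ψ} = P(dφ,dψ)` on functions
satisfies the Jacobi identity (equivalently `[P,P]_S = 0`). -/
def IsPoisson (P : Ω →ₗ[R] Ω →ₗ[R] R) (d : R →+ Ω) : Prop :=
  ∀ φ ψ χ : R,
    P (d (P (d φ) (d ψ))) (d χ) + P (d (P (d ψ) (d χ))) (d φ) +
      P (d (P (d χ) (d φ))) (d ψ) = 0

/-- The torsion of a contravariant connection `D` (with Koszul bracket `K`). -/
def torsion (D K : Ω → Ω → Ω) (α β : Ω) : Ω := D α β - D β α - K α β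

/-- The curvature `ℛ(α,β)γ = D_α D_β γ − D_β D_α γ − D_{[α,β]} γ` of a
contravariant connection `D` (with Koszul bracket `K`). -/
def curv (D K : Ω → Ω → Ω) (α β γ : Ω) : Ω :=
  D α (D β γ) - D β (D α γ) - D (K α β) γ

/-- The contravariant derivative `(D_α Q)(β,γ)` of a bivector field `Q`,
with respect to a contravariant connection `D` anchored by `P`. -/
def covBivector (P Q : Ω →ₗ[R] Ω →ₗ[R] R) (d : R →+ Ω) (D : Ω → Ω → Ω)
    (α β γ : Ω) : R :=
  anchorFun P d α (Q β γ) - Q (D α β) γ - Q β (D α γ)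

/-! ### Horizontal and vertical lifts to a product manifold

`(R₁, Ω₁)` and `(R₂, Ω₂)` model the functions and 1-forms of the factors
`M₁`, `M₂`, and `(R, Ω)` those of the product `M₁ × M₂`.  The lifts
`φ₁ʰ = φ₁ ∘ σ₁`, `φ₂ᵛ = φ₂ ∘ σ₂`, `α₁ʰ = σ₁^*α₁`, `α₂ᵛ = σ₂^*α₂` are encoded
by the ring homomorphisms `hF`, `vF` and the additive maps `hΩ`, `vΩ`. -/

/-- The horizontal/vertical lifts of functions and 1-forms to the product. -/
structure ProductLift
    (R₁ : Type*) [CommRing R₁] (Ω₁ : Type*) [AddCommGroup Ω₁] [Module R₁ Ω₁]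
    (R₂ : Type*) [CommRing R₂] (Ω₂ : Type*) [AddCommGroup Ω₂] [Module R₂ Ω₂]
    (R : Type*) [CommRing R] (Ω : Type*) [AddCommGroup Ω] [Module R Ω]
    (d₁ : R₁ →+ Ω₁) (d₂ : R₂ →+ Ω₂) (d : R →+ Ω) where
  hF : R₁ →+* R
  vF : R₂ →+* R
  hΩ : Ω₁ →+ Ω
  vΩ : Ω₂ →+ Ω
  hΩ_smul : ∀ (φ : R₁) (α : Ω₁), hΩ (φ • α) = hF φ • hΩ α
  vΩ_smul : ∀ (φ : R₂) (α : Ω₂), vΩ (φ • α) = vF φ • vΩ α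
  d_hF : ∀ φ : R₁, d (hF φ) = hΩ (d₁ φ)
  d_vF : ∀ φ : R₂, d (vF φ) = vΩ (d₂ φ)
  span_lifts : ∀ ω : Ω, ω ∈ Submodule.span R (Set.range ⇑hΩ ∪ Set.range ⇑vΩ)

/-- `Pm` is the warped bivector field `Π^μ = Π₁ʰ + μʰ Π₂ᵛ` on the product,
relative to the bivector fields `P₁`, `P₂` and the warping function `μ`.
It is the unique bivector field with these values on lifted 1-forms. -/
structure IsWarpedBivector
    {R₁ : Type*} [CommRing R₁] {Ω₁ : Type*} [AddCommGroup Ω₁] [Module R₁ Ω₁]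
    {R₂ : Type*} [CommRing R₂] {Ω₂ : Type*} [AddCommGroup Ω₂] [Module R₂ Ω₂]
    {R : Type*} [CommRing R] {Ω : Type*} [AddCommGroup Ω] [Module R Ω]
    {d₁ : R₁ →+ Ω₁} {d₂ : R₂ →+ Ω₂} {d : R →+ Ω}
    (L : ProductLift R₁ Ω₁ R₂ Ω₂ R Ω d₁ d₂ d)
    (P₁ : Ω₁ →ₗ[R₁] Ω₁ →ₗ[R₁] R₁) (P₂ : Ω₂ →ₗ[R₂] Ω₂ →ₗ[R₂] R₂)
    (μ : R₁) (Pm : Ω →ₗ[R] Ω →ₗ[R] R) : Prop where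
  hh : ∀ α β : Ω₁, Pm (L.hΩ α) (L.hΩ β) = L.hF (P₁ α β)
  vv : ∀ α β : Ω₂, Pm (L.vΩ α) (L.vΩ β) = L.hF μ * L.vF (P₂ α β)
  hv : ∀ (α : Ω₁) (β : Ω₂), Pm (L.hΩ α) (L.vΩ β) = 0

/-- `gf` is the contravariant warped metric `g^f = g₁ʰ + fʰ g₂ᵛ` on the
product, relative to the cometrics `g₁`, `g₂` and the warping function `f`. -/
structure IsWarpedCometric
    {R₁ : Type*} [CommRing R₁] {Ω₁ : Type*} [AddCommGroup Ω₁] [Module R₁ Ω₁]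
    {R₂ : Type*} [CommRing R₂] {Ω₂ : Type*} [AddCommGroup Ω₂] [Module R₂ Ω₂]
    {R : Type*} [CommRing R] {Ω : Type*} [AddCommGroup Ω] [Module R Ω]
    {d₁ : R₁ →+ Ω₁} {d₂ : R₂ →+ Ω₂} {d : R →+ Ω}
    (L : ProductLift R₁ Ω₁ R₂ Ω₂ R Ω d₁ d₂ d)
    (g₁ : Ω₁ →ₗ[R₁] Ω₁ →ₗ[R₁] R₁) (g₂ : Ω₂ →ₗ[R₂] Ω₂ →ₗ[R₂] R₂)
    (f : R₁) (gf : Ω →ₗ[R] Ω →ₗ[R] R) : Prop where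
  hh : ∀ α β : Ω₁, gf (L.hΩ α) (L.hΩ β) = L.hF (g₁ α β)
  vv : ∀ α β : Ω₂, gf (L.vΩ α) (L.vΩ β) = L.hF f * L.vF (g₂ α β)
  hv : ∀ (α : Ω₁) (β : Ω₂), gf (L.hΩ α) (L.vΩ β) = 0

theorem IsDifferential.map_one {d : R →+ Ω} (hd : IsDifferential d) : d 1 = 0 := by
  simpa using hd 1 1

theorem IsDifferential.map_two {d : R →+ Ω} (hd : IsDifferential d) : d 2 = 0 := by
  rw [← one_add_one_eq_two, map_add, hd.map_one, add_zero]

theorem anchorFun_mul (P : Ω →ₗ[R] Ω →ₗ[R] R) {d : R →+ Ω} (hd : IsDifferential d)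
    (α : Ω) (φ ψ : R) :
    anchorFun P d α (φ * ψ) = φ * anchorFun P d α ψ + ψ * anchorFun P d α φ := by
  simp only [anchorFun, hd φ ψ, map_add, map_smul, smul_eq_mul]

theorem anchorFun_two (P : Ω →ₗ[R] Ω →ₗ[R] R) {d : R →+ Ω} (hd : IsDifferential d)
    (α : Ω) : anchorFun P d α 2 = 0 := by
  rw [anchorFun, hd.map_two, map_zero]

theorem IsBivector.skew {P : Ω →ₗ[R] Ω →ₗ[R] R} (hP : IsBivector P) (α β : Ω) :
    P α β = -P β α := by
  have h := hP (α + β)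
  simp only [map_add, LinearMap.add_apply, hP α, hP β] at h
  linear_combination h

namespace IsKoszulBracket

variable {P : Ω →ₗ[R] Ω →ₗ[R] R} {d : R →+ Ω} {K : Ω → Ω → Ω}

theorem zero_right (hK : IsKoszulBracket P d K) (α : Ω) : K α 0 = 0 := by
  simpa [anchorFun] using hK.leibniz α 0 0

theorem zero_left (hK : IsKoszulBracket P d K) (α : Ω) : K 0 α = 0 := by
  rw [hK.skew, hK.zero_right, neg_zero]

theorem add_right (hK : IsKoszulBracket P d K) (α β γ : Ω) :
    K α (β + γ) = K α β + K α γ := by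
  rw [hK.skew, hK.add_left, hK.skew β, hK.skew γ, neg_add, neg_neg, neg_neg]

theorem smul_left (hK : IsKoszulBracket P d K) (φ : R) (α β : Ω) :
    K (φ • α) β = φ • K α β - anchorFun P d β φ • α := by
  rw [hK.skew, hK.leibniz, hK.skew β α]
  module

end IsKoszulBracket

theorem IsContravariantConnection.zero_left {P : Ω →ₗ[R] Ω →ₗ[R] R} {d : R →+ Ω}
    {D : Ω → Ω → Ω} (hD : IsContravariantConnection P d D) (β : Ω) : D 0 β = 0 := by
  simpa using hD.add_left 0 0 β

theorem IsContravariantConnection.sub_right {P : Ω →ₗ[R] Ω →ₗ[R] R} {d : R →+ Ω}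
    {D : Ω → Ω → Ω} (hD : IsContravariantConnection P d D) (α β γ : Ω) :
    D α (β - γ) = D α β - D α γ := by
  rw [eq_sub_iff_add_eq, ← hD.add_right, sub_add_cancel]

namespace IsLeviCivita

variable {g P : Ω →ₗ[R] Ω →ₗ[R] R} {d : R →+ Ω} {K D : Ω → Ω → Ω}

theorem koszul_formula (hLC : IsLeviCivita g P d K D) (hg : IsCometric g) (α β γ : Ω) :
    2 * g (D α β) γ =
      anchorFun P d α (g β γ) + anchorFun P d β (g α γ) - anchorFun P d γ (g α β)
        + g (K α β) γ - g (K α γ) β - g (K β γ) α := by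
  have hβα : D β α = D α β - K α β := by rw [← hLC.torsion_free]; abel
  have hγα : D γ α = D α γ - K α γ := by rw [← hLC.torsion_free]; abel
  have hγβ : D γ β = D β γ - K β γ := by rw [← hLC.torsion_free]; abel
  have E₁ := hLC.metric α β γ
  have E₂ := hLC.metric β α γ
  have E₃ := hLC.metric γ α β
  rw [hβα, map_sub, LinearMap.sub_apply] at E₂
  rw [hγα, hγβ, map_sub, map_sub, LinearMap.sub_apply] at E₃
  linear_combination -E₁ - E₂ + E₃ - hg β (D α γ) - hg α (K β γ)

theorem pairing_congr (hLC : IsLeviCivita g P d K D) (θ : Ω) {x y : Ω} (h : g x = g y) :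
    g (D θ x) = g (D θ y) := by
  ext z
  have hx := hLC.metric θ x z
  have hy := hLC.metric θ y z
  rw [h] at hx
  linear_combination hy - hx

theorem two_smul_pairing_congr (hLC : IsLeviCivita g P d K D) (hd : IsDifferential d)
    (θ : Ω) {x y : Ω} (h : (2 : R) • g x = g y) : (2 : R) • g (D θ x) = g (D θ y) := by
  have hD : D θ ((2 : R) • x) = (2 : R) • D θ x := by
    rw [hLC.conn.smul_right, anchorFun_two P hd, zero_smul, add_zero]
  rw [← map_smul, ← hD]
  exact hLC.pairing_congr θ (by rw [map_smul, h])

end IsLeviCivita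

theorem four_mul_algebraMap_inv_four {A : Type*} [CommRing A] [Algebra ℝ A] :
    4 * algebraMap ℝ A 4⁻¹ = 1 := by
  rw [← map_ofNat (algebraMap ℝ A) 4, ← map_mul]
  norm_num

theorem two_mul_algebraMap_inv_four {A : Type*} [CommRing A] [Algebra ℝ A] :
    2 * algebraMap ℝ A 4⁻¹ = algebraMap ℝ A 2⁻¹ := by
  rw [← map_ofNat (algebraMap ℝ A) 2, ← map_mul]
  norm_num

theorem map_algebraMap_inv_four {A B : Type*} [CommRing A] [Algebra ℝ A] [CommRing B]
    [Algebra ℝ B] (φ : A →+* B) : φ (algebraMap ℝ A 4⁻¹) = algebraMap ℝ B 4⁻¹ := by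
  have h := congrArg φ (four_mul_algebraMap_inv_four (A := A))
  rw [map_mul, map_ofNat, map_one] at h
  linear_combination algebraMap ℝ B 4⁻¹ * h -
    φ (algebraMap ℝ A 4⁻¹) * four_mul_algebraMap_inv_four (A := B)

section WarpedProduct

variable {R₁ : Type*} [CommRing R₁] {Ω₁ : Type*} [AddCommGroup Ω₁] [Module R₁ Ω₁]
  {R₂ : Type*} [CommRing R₂] {Ω₂ : Type*} [AddCommGroup Ω₂] [Module R₂ Ω₂]
  {d₁ : R₁ →+ Ω₁} {d₂ : R₂ →+ Ω₂} {d : R →+ Ω} {L : ProductLift R₁ Ω₁ R₂ Ω₂ R Ω d₁ d₂ d}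
  {g₁ P₁ : Ω₁ →ₗ[R₁] Ω₁ →ₗ[R₁] R₁} {g₂ P₂ : Ω₂ →ₗ[R₂] Ω₂ →ₗ[R₂] R₂}
  {f finv μ : R₁} {gf Pm : Ω →ₗ[R] Ω →ₗ[R] R} {J₁ : Ω₁ →ₗ[R₁] Ω₁} {J₂ : Ω₂ →ₗ[R₂] Ω₂}
  {K₁ D₁ : Ω₁ → Ω₁ → Ω₁} {K₂ D₂ : Ω₂ → Ω₂ → Ω₂} {K Dm : Ω → Ω → Ω}

theorem ProductLift.linearMap_ext (L : ProductLift R₁ Ω₁ R₂ Ω₂ R Ω d₁ d₂ d)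
    {M : Type*} [AddCommGroup M] [Module R M] {ℓ ℓ' : Ω →ₗ[R] M}
    (hh : ∀ α, ℓ (L.hΩ α) = ℓ' (L.hΩ α)) (hv : ∀ β, ℓ (L.vΩ β) = ℓ' (L.vΩ β)) : ℓ = ℓ' := by
  refine LinearMap.ext_on (Submodule.eq_top_iff'.mpr L.span_lifts) ?_
  rintro _ (⟨α, rfl⟩ | ⟨β, rfl⟩)
  exacts [hh α, hv β]

theorem IsWarpedCometric.vh (hgf : IsWarpedCometric L g₁ g₂ f gf) (hgfc : IsCometric gf)
    (β : Ω₂) (α : Ω₁) : gf (L.vΩ β) (L.hΩ α) = 0 := by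
  rw [hgfc, hgf.hv]

namespace IsWarpedBivector

theorem anchorFun_hΩ_hF (hPm : IsWarpedBivector L P₁ P₂ μ Pm) (α : Ω₁) (φ : R₁) :
    anchorFun Pm d (L.hΩ α) (L.hF φ) = L.hF (anchorFun P₁ d₁ α φ) := by
  rw [anchorFun, L.d_hF, hPm.hh, anchorFun]

theorem anchorFun_hΩ_vF (hPm : IsWarpedBivector L P₁ P₂ μ Pm) (α : Ω₁) (φ : R₂) :
    anchorFun Pm d (L.hΩ α) (L.vF φ) = 0 := by
  rw [anchorFun, L.d_vF, hPm.hv]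

theorem anchorFun_vΩ_hF (hPm : IsWarpedBivector L P₁ P₂ μ Pm) (hPmb : IsBivector Pm)
    (β : Ω₂) (φ : R₁) : anchorFun Pm d (L.vΩ β) (L.hF φ) = 0 := by
  rw [anchorFun, L.d_hF, hPmb.skew, hPm.hv, neg_zero]

theorem anchorFun_vΩ_vF (hPm : IsWarpedBivector L P₁ P₂ μ Pm) (β : Ω₂) (φ : R₂) :
    anchorFun Pm d (L.vΩ β) (L.vF φ) = L.hF μ * L.vF (anchorFun P₂ d₂ β φ) := by
  rw [anchorFun, L.d_vF, hPm.vv, anchorFun]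

theorem koszul_hΩ_vΩ (hPm : IsWarpedBivector L P₁ P₂ μ Pm) (hPmb : IsBivector Pm)
    (hK : IsKoszulBracket Pm d K) (hspan₁ : Submodule.span R₁ (Set.range ⇑d₁) = ⊤)
    (hspan₂ : Submodule.span R₂ (Set.range ⇑d₂) = ⊤) (α : Ω₁) (β : Ω₂) :
    K (L.hΩ α) (L.vΩ β) = 0 := by
  induction (hspan₁ ▸ Submodule.mem_top : α ∈ Submodule.span R₁ (Set.range ⇑d₁))
    using Submodule.span_induction with
  | mem _ hα =>
    obtain ⟨φ, rfl⟩ := hα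
    induction (hspan₂ ▸ Submodule.mem_top : β ∈ Submodule.span R₂ (Set.range ⇑d₂))
      using Submodule.span_induction with
    | mem _ hβ =>
      obtain ⟨ψ, rfl⟩ := hβ
      rw [← L.d_hF, ← L.d_vF, hK.exact_exact, L.d_hF, L.d_vF, hPm.hv, map_zero]
    | zero => rw [map_zero, hK.zero_right]
    | add β β' _ _ ih ih' => rw [map_add, hK.add_right, ih, ih', add_zero]
    | smul c β _ ih =>
      rw [L.vΩ_smul, hK.leibniz, ih, smul_zero, hPm.anchorFun_hΩ_vF, zero_smul, add_zero]
  | zero => rw [map_zero, hK.zero_left]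
  | add α α' _ _ ih ih' => rw [map_add, hK.add_left, ih, ih', add_zero]
  | smul c α _ ih =>
    rw [L.hΩ_smul, hK.smul_left, ih, smul_zero, hPm.anchorFun_vΩ_hF hPmb, zero_smul, sub_zero]

theorem koszul_hΩ_hΩ (hPm : IsWarpedBivector L P₁ P₂ μ Pm) (hK : IsKoszulBracket Pm d K)
    (hK₁ : IsKoszulBracket P₁ d₁ K₁) (hspan₁ : Submodule.span R₁ (Set.range ⇑d₁) = ⊤)
    (α β : Ω₁) : K (L.hΩ α) (L.hΩ β) = L.hΩ (K₁ α β) := by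
  induction (hspan₁ ▸ Submodule.mem_top : α ∈ Submodule.span R₁ (Set.range ⇑d₁))
    using Submodule.span_induction with
  | mem _ hα =>
    obtain ⟨φ, rfl⟩ := hα
    induction (hspan₁ ▸ Submodule.mem_top : β ∈ Submodule.span R₁ (Set.range ⇑d₁))
      using Submodule.span_induction with
    | mem _ hβ =>
      obtain ⟨ψ, rfl⟩ := hβ
      rw [← L.d_hF, ← L.d_hF, hK.exact_exact, L.d_hF, L.d_hF, hPm.hh, L.d_hF,
        hK₁.exact_exact]
    | zero => rw [map_zero, hK.zero_right, hK₁.zero_right, map_zero]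
    | add β β' _ _ ih ih' => rw [map_add, hK.add_right, ih, ih', hK₁.add_right, map_add]
    | smul c β _ ih =>
      rw [L.hΩ_smul, hK.leibniz, ih, hPm.anchorFun_hΩ_hF, hK₁.leibniz, map_add, L.hΩ_smul,
        L.hΩ_smul]
  | zero => rw [map_zero, hK.zero_left, hK₁.zero_left, map_zero]
  | add α α' _ _ ih ih' => rw [map_add, hK.add_left, ih, ih', hK₁.add_left, map_add]
  | smul c α _ ih =>
    rw [L.hΩ_smul, hK.smul_left, ih, hPm.anchorFun_hΩ_hF, hK₁.smul_left, map_sub, L.hΩ_smul,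
      L.hΩ_smul]

theorem koszul_vΩ_vΩ (hPm : IsWarpedBivector L P₁ P₂ μ Pm) (hd : IsDifferential d)
    (hK : IsKoszulBracket Pm d K) (hK₂ : IsKoszulBracket P₂ d₂ K₂)
    (hspan₂ : Submodule.span R₂ (Set.range ⇑d₂) = ⊤) (α β : Ω₂) :
    K (L.vΩ α) (L.vΩ β) = L.hF μ • L.vΩ (K₂ α β) + L.vF (P₂ α β) • L.hΩ (d₁ μ) := by
  induction (hspan₂ ▸ Submodule.mem_top : α ∈ Submodule.span R₂ (Set.range ⇑d₂))
    using Submodule.span_induction with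
  | mem _ hα =>
    obtain ⟨φ, rfl⟩ := hα
    induction (hspan₂ ▸ Submodule.mem_top : β ∈ Submodule.span R₂ (Set.range ⇑d₂))
      using Submodule.span_induction with
    | mem _ hβ =>
      obtain ⟨ψ, rfl⟩ := hβ
      rw [← L.d_vF, ← L.d_vF, hK.exact_exact, L.d_vF, L.d_vF, hPm.vv, hd, L.d_vF, L.d_hF,
        hK₂.exact_exact]
    | zero => simp [hK.zero_right, hK₂.zero_right]
    | add β β' _ _ ih ih' =>
      rw [map_add, hK.add_right, ih, ih', hK₂.add_right]
      simp only [map_add]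
      module
    | smul c β _ ih =>
      rw [L.vΩ_smul, hK.leibniz, ih, hPm.anchorFun_vΩ_vF, hK₂.leibniz]
      simp only [anchorFun, map_add, L.vΩ_smul, map_smul, smul_eq_mul, map_mul]
      module
  | zero => simp [hK.zero_left, hK₂.zero_left]
  | add α α' _ _ ih ih' =>
    rw [map_add, hK.add_left, ih, ih', hK₂.add_left]
    simp only [map_add, LinearMap.add_apply]
    module
  | smul c α _ ih =>
    rw [L.vΩ_smul, hK.smul_left, ih, hPm.anchorFun_vΩ_vF, hK₂.smul_left]
    simp only [anchorFun, map_sub, map_smul, L.vΩ_smul, smul_eq_mul, map_mul,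
      LinearMap.smul_apply]
    module

end IsWarpedBivector

namespace IsLeviCivita

theorem vΩ_hΩ (hDm : IsLeviCivita gf Pm d K Dm)
    (hKhv : ∀ (α : Ω₁) (β : Ω₂), K (L.hΩ α) (L.vΩ β) = 0) (α : Ω₁) (β : Ω₂) :
    Dm (L.vΩ β) (L.hΩ α) = Dm (L.hΩ α) (L.vΩ β) := by
  have h := hDm.torsion_free (L.hΩ α) (L.vΩ β)
  rw [hKhv] at h
  exact (sub_eq_zero.mp h).symm

theorem pairing_hΩ_hΩ (hDm : IsLeviCivita gf Pm d K Dm) (hD₁ : IsLeviCivita g₁ P₁ d₁ K₁ D₁)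
    (hgfc : IsCometric gf) (hg₁ : IsCometric g₁) (hgf : IsWarpedCometric L g₁ g₂ f gf)
    (hPm : IsWarpedBivector L P₁ P₂ μ Pm) (hPmb : IsBivector Pm)
    (hKhh : ∀ α β : Ω₁, K (L.hΩ α) (L.hΩ β) = L.hΩ (K₁ α β))
    (hKhv : ∀ (α : Ω₁) (β : Ω₂), K (L.hΩ α) (L.vΩ β) = 0) (h2 : IsUnit (2 : R)) (α β : Ω₁) :
    gf (Dm (L.hΩ α) (L.hΩ β)) = gf (L.hΩ (D₁ α β)) := by
  refine L.linearMap_ext (fun γ ↦ h2.mul_left_cancel ?_) (fun γ ↦ h2.mul_left_cancel ?_)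
  · have kos := hDm.koszul_formula hgfc (L.hΩ α) (L.hΩ β) (L.hΩ γ)
    rw [hgf.hh, hgf.hh, hgf.hh, hKhh, hKhh, hKhh, hgf.hh, hgf.hh, hgf.hh,
      hPm.anchorFun_hΩ_hF, hPm.anchorFun_hΩ_hF, hPm.anchorFun_hΩ_hF] at kos
    rw [kos, hgf.hh, ← map_ofNat L.hF 2, ← map_mul, hD₁.koszul_formula hg₁]
    simp only [map_add, map_sub]
  · have kos := hDm.koszul_formula hgfc (L.hΩ α) (L.hΩ β) (L.vΩ γ)
    rw [hgf.hv, hgf.hv, hgf.hh, hKhh, hgf.hv, hKhv, hKhv, hPm.anchorFun_vΩ_hF hPmb] at kos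
    rw [kos, hgf.hv]
    simp [anchorFun]

theorem two_smul_pairing_hΩ_vΩ (hDm : IsLeviCivita gf Pm d K Dm) (hd : IsDifferential d)
    (hgfc : IsCometric gf) (hgf : IsWarpedCometric L g₁ g₂ f gf)
    (hPm : IsWarpedBivector L P₁ P₂ μ Pm) (hPmb : IsBivector Pm) (hfinv : f * finv = 1)
    (hJ₂ : ∀ α β : Ω₂, g₂ (J₂ α) β = P₂ α β)
    (hKhh : ∀ α β : Ω₁, K (L.hΩ α) (L.hΩ β) = L.hΩ (K₁ α β))
    (hKhv : ∀ (α : Ω₁) (β : Ω₂), K (L.hΩ α) (L.vΩ β) = 0)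
    (hKvv : ∀ α β : Ω₂, K (L.vΩ α) (L.vΩ β) = L.hF μ • L.vΩ (K₂ α β) + L.vF (P₂ α β) • L.hΩ (d₁ μ))
    (α : Ω₁) (β : Ω₂) :
    (2 : R) • gf (Dm (L.hΩ α) (L.vΩ β)) =
      gf (L.hF (finv * P₁ α (d₁ f)) • L.vΩ β - L.hF (finv * g₁ (d₁ μ) α) • L.vΩ (J₂ β)) := by
  refine L.linearMap_ext (fun γ ↦ ?_) (fun γ ↦ ?_) <;>
    rw [LinearMap.smul_apply, smul_eq_mul]
  · have kos := hDm.koszul_formula hgfc (L.hΩ α) (L.vΩ β) (L.hΩ γ)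
    rw [hgf.vh hgfc, hgf.hh, hgf.hv, hKhv, hKhh, hDm.koszul.skew (L.vΩ β) (L.hΩ γ),
      hKhv, hPm.anchorFun_vΩ_hF hPmb] at kos
    rw [kos]
    simp [anchorFun, hgf.vh hgfc, hgf.hv]
  · have kos := hDm.koszul_formula hgfc (L.hΩ α) (L.vΩ β) (L.vΩ γ)
    rw [hgf.vv, hgf.hv, hgf.hv, hKhv, hKhv, hKvv, anchorFun_mul Pm hd, hPm.anchorFun_hΩ_vF,
      hPm.anchorFun_hΩ_hF] at kos
    rw [kos]
    have hff : L.hF f * L.hF finv = 1 := by rw [← map_mul, hfinv, map_one]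
    simp only [anchorFun, map_add, map_sub, LinearMap.add_apply, LinearMap.sub_apply, map_smul,
      LinearMap.smul_apply, smul_eq_mul, map_zero, LinearMap.zero_apply, hgf.vv, hgf.hh,
      hgf.vh hgfc, hJ₂, map_mul]
    linear_combination (L.vF (P₂ β γ) * L.hF (g₁ (d₁ μ) α)
      - L.vF (g₂ β γ) * L.hF (P₁ α (d₁ f))) * hff

theorem two_smul_pairing_vΩ_vΩ (hDm : IsLeviCivita gf Pm d K Dm)
    (hD₂ : IsLeviCivita g₂ P₂ d₂ K₂ D₂) (hd : IsDifferential d) (hgfc : IsCometric gf)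
    (hg₂ : IsCometric g₂) (hgf : IsWarpedCometric L g₁ g₂ f gf)
    (hPm : IsWarpedBivector L P₁ P₂ μ Pm) (hPmb : IsBivector Pm) (hP₁b : IsBivector P₁)
    (hJ₁ : ∀ α β : Ω₁, g₁ (J₁ α) β = P₁ α β)
    (hKhv : ∀ (α : Ω₁) (β : Ω₂), K (L.hΩ α) (L.vΩ β) = 0)
    (hKvv : ∀ α β : Ω₂, K (L.vΩ α) (L.vΩ β) = L.hF μ • L.vΩ (K₂ α β) + L.vF (P₂ α β) • L.hΩ (d₁ μ))
    (α β : Ω₂) :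
    (2 : R) • gf (Dm (L.vΩ α) (L.vΩ β)) =
      gf ((2 * L.hF μ) • L.vΩ (D₂ α β) + L.vF (g₂ α β) • L.hΩ (J₁ (d₁ f)) +
        L.vF (P₂ α β) • L.hΩ (d₁ μ)) := by
  refine L.linearMap_ext (fun γ ↦ ?_) (fun γ ↦ ?_) <;>
    rw [LinearMap.smul_apply, smul_eq_mul]
  · have kos := hDm.koszul_formula hgfc (L.vΩ α) (L.vΩ β) (L.hΩ γ)
    rw [hgf.vh hgfc, hgf.vh hgfc, hgf.vv, hKvv, hDm.koszul.skew (L.vΩ α) (L.hΩ γ), hKhv,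
      hDm.koszul.skew (L.vΩ β) (L.hΩ γ), hKhv, anchorFun_mul Pm hd, hPm.anchorFun_hΩ_vF,
      hPm.anchorFun_hΩ_hF] at kos
    have hJ : anchorFun P₁ d₁ γ f = -g₁ (J₁ (d₁ f)) γ := by rw [anchorFun, hP₁b.skew, hJ₁]
    rw [kos, hJ]
    simp only [anchorFun, map_add, map_neg, neg_zero, map_zero, LinearMap.add_apply, map_smul,
      LinearMap.smul_apply, smul_eq_mul, LinearMap.zero_apply, hgf.hh, hgf.vh hgfc]
    ring
  · have kos := hDm.koszul_formula hgfc (L.vΩ α) (L.vΩ β) (L.vΩ γ)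
    rw [hgf.vv, hgf.vv, hgf.vv, hKvv, hKvv, hKvv, anchorFun_mul Pm hd, anchorFun_mul Pm hd,
      anchorFun_mul Pm hd, hPm.anchorFun_vΩ_hF hPmb, hPm.anchorFun_vΩ_hF hPmb,
      hPm.anchorFun_vΩ_hF hPmb, hPm.anchorFun_vΩ_vF, hPm.anchorFun_vΩ_vF,
      hPm.anchorFun_vΩ_vF] at kos
    have kos₂ := congrArg L.vF (hD₂.koszul_formula hg₂ α β γ)
    simp only [map_mul, map_add, map_sub, map_ofNat, anchorFun] at kos₂ kos
    rw [kos]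
    simp only [map_add, LinearMap.add_apply, map_smul, LinearMap.smul_apply, smul_eq_mul,
      hgf.vv, hgf.hv]
    linear_combination (-(L.hF f * L.hF μ)) * kos₂

end IsLeviCivita

theorem curv_pairing_hΩ_hΩ (hDm : IsLeviCivita gf Pm d K Dm)
    (hKhh : ∀ α β : Ω₁, K (L.hΩ α) (L.hΩ β) = L.hΩ (K₁ α β))
    (hDhh : ∀ α β : Ω₁, gf (Dm (L.hΩ α) (L.hΩ β)) = gf (L.hΩ (D₁ α β))) (α β γ : Ω₁) :
    gf (curv Dm K (L.hΩ α) (L.hΩ β) (L.hΩ γ)) = gf (L.hΩ (curv D₁ K₁ α β γ)) := by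
  simp only [curv, map_sub, hDm.pairing_congr _ (hDhh _ _), hDhh, hKhh]

theorem four_mul_curv_pairing_hΩ_vΩ (hDm : IsLeviCivita gf Pm d K Dm) (hd : IsDifferential d)
    (hgfc : IsCometric gf) (hgf : IsWarpedCometric L g₁ g₂ f gf)
    (hPm : IsWarpedBivector L P₁ P₂ μ Pm) (hP₁b : IsBivector P₁) (hP₂b : IsBivector P₂)
    (hg₂ : IsCometric g₂) (hJ₁ : ∀ α β : Ω₁, g₁ (J₁ α) β = P₁ α β)
    (hJ₂ : ∀ α β : Ω₂, g₂ (J₂ α) β = P₂ α β)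
    (hKhv : ∀ (α : Ω₁) (β : Ω₂), K (L.hΩ α) (L.vΩ β) = 0)
    (hDhh : ∀ α β : Ω₁, gf (Dm (L.hΩ α) (L.hΩ β)) = gf (L.hΩ (D₁ α β)))
    (hDhv : ∀ (α : Ω₁) (β : Ω₂), (2 : R) • gf (Dm (L.hΩ α) (L.vΩ β)) =
      gf (L.hF (finv * P₁ α (d₁ f)) • L.vΩ β - L.hF (finv * g₁ (d₁ μ) α) • L.vΩ (J₂ β)))
    (hDvv : ∀ α β : Ω₂, (2 : R) • gf (Dm (L.vΩ α) (L.vΩ β)) =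
      gf ((2 * L.hF μ) • L.vΩ (D₂ α β) + L.vF (g₂ α β) • L.hΩ (J₁ (d₁ f)) +
        L.vF (P₂ α β) • L.hΩ (d₁ μ)))
    (α : Ω₁) (β : Ω₂) :
    4 * gf (curv Dm K (L.hΩ α) (L.vΩ β) (L.vΩ β)) (L.hΩ α) =
      L.hF (finv * g₁ (d₁ μ) α ^ 2) * L.vF (g₂ (J₂ β) (J₂ β)) +
        L.hF (finv * g₁ (J₁ (d₁ f)) α ^ 2 + 2 * g₁ (D₁ α (J₁ (d₁ f))) α) * L.vF (g₂ β β) := by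
  have hA := congrArg (· (L.hΩ α)) (hDm.two_smul_pairing_congr hd (L.hΩ α) (hDvv β β))
  have hB := congrArg (· (L.hΩ α)) (hDm.two_smul_pairing_congr hd (L.vΩ β) (hDhv α β))
  have hvert : ∀ x : Ω₂, 2 * gf (Dm (L.hΩ α) (L.vΩ x)) (L.hΩ α) = 0 := by
    intro x
    simpa [hgf.vh hgfc] using congrArg (· (L.hΩ α)) (hDhv α x)
  have hver2 : ∀ x : Ω₂, 2 * gf (Dm (L.vΩ β) (L.vΩ x)) (L.hΩ α) =
      L.vF (g₂ β x) * L.hF (g₁ (J₁ (d₁ f)) α) + L.vF (P₂ β x) * L.hF (g₁ (d₁ μ) α) := by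
    intro x
    simpa [hgf.vh hgfc, hgf.hh] using congrArg (· (L.hΩ α)) (hDvv β x)
  have hβJβ : g₂ β (J₂ β) = 0 := by rw [hg₂, hJ₂, hP₂b]
  have hβJ := hver2 (J₂ β)
  rw [hβJβ, ← hJ₂] at hβJ
  have hββ := hver2 β
  rw [hP₂b] at hββ
  have hPf : P₁ α (d₁ f) = -g₁ (J₁ (d₁ f)) α := by rw [hP₁b.skew, hJ₁]
  simp only [LinearMap.smul_apply, smul_eq_mul, hDm.conn.add_right, hDm.conn.smul_right,
    hDm.conn.sub_right, map_add, map_sub, map_smul, LinearMap.add_apply, LinearMap.sub_apply,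
    hgf.vh hgfc, hgf.hh, hPm.anchorFun_hΩ_vF, hP₂b β, hDhh, map_zero, hPf] at hA hB
  simp only [curv, hKhv, hDm.conn.zero_left, map_sub, LinearMap.sub_apply, sub_zero]
  simp only [anchorFun, map_zero, map_mul, map_neg, map_add, map_pow, map_ofNat, zero_mul,
    mul_zero, add_zero, zero_add] at hA hB hββ hβJ ⊢
  linear_combination 2 * hA + 2 * L.hF μ * hvert (D₂ β β) - 2 * hB
    + L.hF finv * L.hF (g₁ (J₁ (d₁ f)) α) * hββ + L.hF finv * L.hF (g₁ (d₁ μ) α) * hβJ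

theorem two_mul_pairing_vΩ_vΩ_vΩ (hgf : IsWarpedCometric L g₁ g₂ f gf)
    (hDvv : ∀ α β : Ω₂, (2 : R) • gf (Dm (L.vΩ α) (L.vΩ β)) =
      gf ((2 * L.hF μ) • L.vΩ (D₂ α β) + L.vF (g₂ α β) • L.hΩ (J₁ (d₁ f)) +
        L.vF (P₂ α β) • L.hΩ (d₁ μ)))
    (α β γ : Ω₂) :
    2 * gf (Dm (L.vΩ α) (L.vΩ β)) (L.vΩ γ) = 2 * L.hF (μ * f) * L.vF (g₂ (D₂ α β) γ) := by
  have h := congrArg (· (L.vΩ γ)) (hDvv α β)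
  simp only [LinearMap.smul_apply, smul_eq_mul, map_add, map_smul, LinearMap.add_apply,
    hgf.vv, hgf.hv, mul_zero, add_zero] at h
  rw [h, map_mul]
  ring

theorem two_mul_pairing_vΩ_hΩ_vΩ (hgf : IsWarpedCometric L g₁ g₂ f gf) (hfinv : f * finv = 1)
    (hDvh : ∀ (α : Ω₁) (β : Ω₂), Dm (L.vΩ β) (L.hΩ α) = Dm (L.hΩ α) (L.vΩ β))
    (hDhv : ∀ (α : Ω₁) (β : Ω₂), (2 : R) • gf (Dm (L.hΩ α) (L.vΩ β)) =
      gf (L.hF (finv * P₁ α (d₁ f)) • L.vΩ β - L.hF (finv * g₁ (d₁ μ) α) • L.vΩ (J₂ β)))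
    (α : Ω₁) (β γ : Ω₂) :
    2 * gf (Dm (L.vΩ β) (L.hΩ α)) (L.vΩ γ) =
      L.hF (P₁ α (d₁ f)) * L.vF (g₂ β γ) - L.hF (g₁ (d₁ μ) α) * L.vF (g₂ (J₂ β) γ) := by
  have h := congrArg (· (L.vΩ γ)) (hDhv α β)
  simp only [LinearMap.smul_apply, smul_eq_mul, map_sub, map_smul, LinearMap.sub_apply,
    hgf.vv] at h
  have hff : L.hF f * L.hF finv = 1 := by rw [← map_mul, hfinv, map_one]
  rw [hDvh, h, map_mul, map_mul]
  linear_combination (L.hF (P₁ α (d₁ f)) * L.vF (g₂ β γ)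
    - L.hF (g₁ (d₁ μ) α) * L.vF (g₂ (J₂ β) γ)) * hff

theorem four_mul_curv_pairing_vΩ_vΩ (hDm : IsLeviCivita gf Pm d K Dm) (hd : IsDifferential d)
    (hgf : IsWarpedCometric L g₁ g₂ f gf) (hPm : IsWarpedBivector L P₁ P₂ μ Pm)
    (hPmb : IsBivector Pm) (hfinv : f * finv = 1) (hg₁ : IsCometric g₁) (hg₂ : IsCometric g₂)
    (hP₁b : IsBivector P₁) (hP₂b : IsBivector P₂) (hJ₁ : ∀ α β : Ω₁, g₁ (J₁ α) β = P₁ α β)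
    (hJ₂ : ∀ α β : Ω₂, g₂ (J₂ α) β = P₂ α β)
    (hKvv : ∀ α β : Ω₂, K (L.vΩ α) (L.vΩ β) = L.hF μ • L.vΩ (K₂ α β) + L.vF (P₂ α β) • L.hΩ (d₁ μ))
    (hDvh : ∀ (α : Ω₁) (β : Ω₂), Dm (L.vΩ β) (L.hΩ α) = Dm (L.hΩ α) (L.vΩ β))
    (hDhv : ∀ (α : Ω₁) (β : Ω₂), (2 : R) • gf (Dm (L.hΩ α) (L.vΩ β)) =
      gf (L.hF (finv * P₁ α (d₁ f)) • L.vΩ β - L.hF (finv * g₁ (d₁ μ) α) • L.vΩ (J₂ β)))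
    (hDvv : ∀ α β : Ω₂, (2 : R) • gf (Dm (L.vΩ α) (L.vΩ β)) =
      gf ((2 * L.hF μ) • L.vΩ (D₂ α β) + L.vF (g₂ α β) • L.hΩ (J₁ (d₁ f)) +
        L.vF (P₂ α β) • L.hΩ (d₁ μ)))
    (α β : Ω₂) :
    4 * gf (curv Dm K (L.vΩ α) (L.vΩ β) (L.vΩ β)) (L.vΩ α) =
      4 * L.hF (μ ^ 2 * f) * L.vF (g₂ (curv D₂ K₂ α β β) α)
        - 3 * L.hF (g₁ (d₁ μ) (d₁ μ)) * L.vF (P₂ α β ^ 2)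
        - L.hF (g₁ (J₁ (d₁ f)) (J₁ (d₁ f))) * L.vF (g₂ α α * g₂ β β - g₂ α β ^ 2)
        + 2 * L.hF (g₁ (d₁ μ) (J₁ (d₁ f))) * L.vF (P₂ α β * g₂ α β) := by
  have hv : ∀ x y, 2 * gf (Dm (L.vΩ x) (L.vΩ y)) (L.vΩ α) =
      2 * (L.hF μ * L.hF f) * L.vF (g₂ (D₂ x y) α) := by
    simpa only [map_mul] using fun x y ↦ two_mul_pairing_vΩ_vΩ_vΩ hgf hDvv x y α
  have hh := fun x y ↦ two_mul_pairing_vΩ_hΩ_vΩ hgf hfinv hDvh hDhv x y α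
  have hJα := hh (J₁ (d₁ f)) α
  have hJβ := hh (J₁ (d₁ f)) β
  have hμβ := hh (d₁ μ) β
  have hA := congrArg (· (L.vΩ α)) (hDm.two_smul_pairing_congr hd (L.vΩ α) (hDvv β β))
  have hB := congrArg (· (L.vΩ α)) (hDm.two_smul_pairing_congr hd (L.vΩ β) (hDvv α β))
  have hC : Dm (K (L.vΩ α) (L.vΩ β)) (L.vΩ β) =
      L.hF μ • Dm (L.vΩ (K₂ α β)) (L.vΩ β) + L.vF (P₂ α β) • Dm (L.vΩ β) (L.hΩ (d₁ μ)) := by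
    rw [hKvv, hDm.conn.add_left, hDm.conn.smul_left, hDm.conn.smul_left, hDvh]
  have hJJ : P₁ (J₁ (d₁ f)) (d₁ f) = -g₁ (J₁ (d₁ f)) (J₁ (d₁ f)) := by rw [hP₁b.skew, hJ₁]
  have hμJ : P₁ (d₁ μ) (d₁ f) = -g₁ (d₁ μ) (J₁ (d₁ f)) := by rw [hP₁b.skew, ← hJ₁, hg₁]
  have hJ₂α : g₂ (J₂ α) α = 0 := by rw [hJ₂, hP₂b]
  have hJ₂β : g₂ (J₂ β) α = -P₂ α β := by rw [hJ₂, hP₂b.skew]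
  simp only [hJJ, hμJ, hJ₂α, hJ₂β, hg₂ β α] at hJα hJβ hμβ
  simp only [LinearMap.smul_apply, smul_eq_mul, hDm.conn.add_right, hDm.conn.smul_right,
    map_add, map_smul, LinearMap.add_apply, anchorFun_mul Pm hd, anchorFun_two Pm hd,
    hPm.anchorFun_vΩ_hF hPmb, hPm.anchorFun_vΩ_vF, hgf.hv, hP₂b β] at hA hB
  simp only [curv, hC, map_sub, map_add, map_smul, LinearMap.sub_apply, LinearMap.add_apply,
    LinearMap.smul_apply, smul_eq_mul]
  simp only [map_mul, map_pow, map_neg, map_zero, mul_zero, zero_mul, add_zero]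
    at hJα hJβ hμβ hA hB ⊢
  linear_combination 2 * hA + 2 * L.hF μ * hv α (D₂ β β) + L.vF (g₂ β β) * hJα - 2 * hB
    - 2 * L.hF μ * hv β (D₂ α β) - L.vF (g₂ α β) * hJβ - 3 * L.vF (P₂ α β) * hμβ
    - 2 * L.hF μ * hv (K₂ α β) β

theorem sectional_hΩ_vΩ [Algebra ℝ R₁] [Algebra ℝ R] (hgf : IsWarpedCometric L g₁ g₂ f gf)
    (hfinv : f * finv = 1) {α : Ω₁} {β : Ω₂} {nα : R₁} {nβ : R₂} (hnα : g₁ α α * nα = 1)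
    (hnβ : g₂ β β * nβ = 1) {κ : R}
    (hκ : κ * (gf (L.hΩ α) (L.hΩ α) * gf (L.vΩ β) (L.vΩ β) -
      gf (L.hΩ α) (L.vΩ β) * gf (L.hΩ α) (L.vΩ β)) =
        gf (curv Dm K (L.hΩ α) (L.vΩ β) (L.vΩ β)) (L.hΩ α))
    (hc : 4 * gf (curv Dm K (L.hΩ α) (L.vΩ β) (L.vΩ β)) (L.hΩ α) =
      L.hF (finv * g₁ (d₁ μ) α ^ 2) * L.vF (g₂ (J₂ β) (J₂ β)) +
        L.hF (finv * g₁ (J₁ (d₁ f)) α ^ 2 + 2 * g₁ (D₁ α (J₁ (d₁ f))) α) * L.vF (g₂ β β)) :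
    κ = algebraMap ℝ R 4⁻¹ * L.hF (g₁ (d₁ μ) α * g₁ (d₁ μ) α * finv * finv * nα) *
          L.vF (g₂ (J₂ β) (J₂ β) * nβ) +
        L.hF (algebraMap ℝ R₁ 4⁻¹ * (g₁ (J₁ (d₁ f)) α * g₁ (J₁ (d₁ f)) α) * finv * finv * nα +
          algebraMap ℝ R₁ 2⁻¹ * finv * g₁ (D₁ α (J₁ (d₁ f))) α * nα) := by
  have hf := congrArg L.hF hfinv
  have hα := congrArg L.hF hnα
  have hβ := congrArg L.vF hnβ
  have h4 := four_mul_algebraMap_inv_four (A := R)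
  rw [hgf.hh, hgf.vv, hgf.hv] at hκ
  rw [← two_mul_algebraMap_inv_four (A := R₁)]
  simp only [map_mul, map_add, map_pow, map_one, map_ofNat, map_algebraMap_inv_four]
    at hf hα hβ hc ⊢
  grind

theorem sectional_vΩ_vΩ [Algebra ℝ R] (hgf : IsWarpedCometric L g₁ g₂ f gf)
    (hfinv : f * finv = 1) {α β : Ω₂} {w : R₂}
    (hw : (g₂ α α * g₂ β β - g₂ α β * g₂ α β) * w = 1) {κ : R} {κ₂ : R₂}
    (hκ : κ * (gf (L.vΩ α) (L.vΩ α) * gf (L.vΩ β) (L.vΩ β) -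
      gf (L.vΩ α) (L.vΩ β) * gf (L.vΩ α) (L.vΩ β)) =
        gf (curv Dm K (L.vΩ α) (L.vΩ β) (L.vΩ β)) (L.vΩ α))
    (hκ₂ : κ₂ * (g₂ α α * g₂ β β - g₂ α β * g₂ α β) = g₂ (curv D₂ K₂ α β β) α)
    (hc : 4 * gf (curv Dm K (L.vΩ α) (L.vΩ β) (L.vΩ β)) (L.vΩ α) =
      4 * L.hF (μ ^ 2 * f) * L.vF (g₂ (curv D₂ K₂ α β β) α)
        - 3 * L.hF (g₁ (d₁ μ) (d₁ μ)) * L.vF (P₂ α β ^ 2)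
        - L.hF (g₁ (J₁ (d₁ f)) (J₁ (d₁ f))) * L.vF (g₂ α α * g₂ β β - g₂ α β ^ 2)
        + 2 * L.hF (g₁ (d₁ μ) (J₁ (d₁ f))) * L.vF (P₂ α β * g₂ α β)) :
    κ = L.hF (μ * μ * finv) * L.vF κ₂ -
        algebraMap ℝ R 4⁻¹ * L.hF (finv * finv * g₁ (d₁ μ) (d₁ μ)) *
          L.vF (3 * (P₂ α β * P₂ α β) * w) -
        algebraMap ℝ R 4⁻¹ * L.hF (finv * finv * g₁ (J₁ (d₁ f)) (J₁ (d₁ f))) +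
        algebraMap ℝ R 2⁻¹ * L.hF (finv * finv * g₁ (d₁ μ) (J₁ (d₁ f))) *
          L.vF (P₂ α β * g₂ α β * w) := by
  have hf := congrArg L.hF hfinv
  have hw' := congrArg L.vF hw
  have hκ₂' := congrArg L.vF hκ₂
  have h4 := four_mul_algebraMap_inv_four (A := R)
  have h24 := two_mul_algebraMap_inv_four (A := R)
  rw [hgf.vv, hgf.vv, hgf.vv] at hκ
  simp only [map_mul, map_sub, map_pow, map_one, map_ofNat] at hf hw' hκ₂' hc ⊢
  grind

end WarpedProduct

theorem warped_sectional_curvature_general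
    {R₁ : Type*} [CommRing R₁] [Algebra ℝ R₁]
    {Ω₁ : Type*} [AddCommGroup Ω₁] [Module R₁ Ω₁]
    {R₂ : Type*} [CommRing R₂]
    {Ω₂ : Type*} [AddCommGroup Ω₂] [Module R₂ Ω₂]
    {R : Type*} [CommRing R] [Algebra ℝ R]
    {Ω : Type*} [AddCommGroup Ω] [Module R Ω]
    (d₁ : R₁ →+ Ω₁) (d₂ : R₂ →+ Ω₂) (d : R →+ Ω)
    (hd : IsDifferential d)
    (hspan₁ : Submodule.span R₁ (Set.range ⇑d₁) = ⊤)
    (hspan₂ : Submodule.span R₂ (Set.range ⇑d₂) = ⊤)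
    (L : ProductLift R₁ Ω₁ R₂ Ω₂ R Ω d₁ d₂ d)
    -- the cometrics and the bivector fields on the factors:
    (g₁ : Ω₁ →ₗ[R₁] Ω₁ →ₗ[R₁] R₁) (hg₁ : IsCometric g₁)
    (g₂ : Ω₂ →ₗ[R₂] Ω₂ →ₗ[R₂] R₂) (hg₂ : IsCometric g₂)
    (P₁ : Ω₁ →ₗ[R₁] Ω₁ →ₗ[R₁] R₁) (hP₁b : IsBivector P₁)
    (P₂ : Ω₂ →ₗ[R₂] Ω₂ →ₗ[R₂] R₂) (hP₂b : IsBivector P₂)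
    -- the warping functions: `f > 0` (hence invertible), `μ`:
    (f finv : R₁) (hfinv : f * finv = 1) (μ : R₁)
    -- the contravariant warped metric and the warped bivector field:
    (gf : Ω →ₗ[R] Ω →ₗ[R] R) (hgfc : IsCometric gf)
    (hgf : IsWarpedCometric L g₁ g₂ f gf)
    (Pm : Ω →ₗ[R] Ω →ₗ[R] R) (hPmb : IsBivector Pm)
    (hPm : IsWarpedBivector L P₁ P₂ μ Pm)
    -- the Koszul brackets and the Levi-Civita contravariant connections:
    (K₁ : Ω₁ → Ω₁ → Ω₁) (K₂ : Ω₂ → Ω₂ → Ω₂) (K : Ω → Ω → Ω)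
    (D₁ : Ω₁ → Ω₁ → Ω₁) (hD₁ : IsLeviCivita g₁ P₁ d₁ K₁ D₁)
    (D₂ : Ω₂ → Ω₂ → Ω₂) (hD₂ : IsLeviCivita g₂ P₂ d₂ K₂ D₂)
    (Dm : Ω → Ω → Ω) (hDm : IsLeviCivita gf Pm d K Dm)
    -- the fields of homomorphisms `J₁`, `J₂`:
    (J₁ : Ω₁ →ₗ[R₁] Ω₁) (hJ₁ : ∀ α β : Ω₁, g₁ (J₁ α) β = P₁ α β)
    (J₂ : Ω₂ →ₗ[R₂] Ω₂) (hJ₂ : ∀ α β : Ω₂, g₂ (J₂ α) β = P₂ α β)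
    -- the sectional contravariant curvatures:
    (SK : Ω → Ω → R)
    (hSK : ∀ θ η : Ω,
      SK θ η * (gf θ θ * gf η η - gf θ η * gf θ η) = gf (curv Dm K θ η η) θ)
    (SK₁ : Ω₁ → Ω₁ → R₁)
    (hSK₁ : ∀ θ η : Ω₁,
      SK₁ θ η * (g₁ θ θ * g₁ η η - g₁ θ η * g₁ θ η) =
        g₁ (curv D₁ K₁ θ η η) θ)
    (SK₂ : Ω₂ → Ω₂ → R₂)
    (hSK₂ : ∀ θ η : Ω₂,
      SK₂ θ η * (g₂ θ θ * g₂ η η - g₂ θ η * g₂ θ η) =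
        g₂ (curv D₂ K₂ θ η η) θ) :
    let Jdf := J₁ (d₁ f)
    -- 1.
    (∀ α₁ β₁ : Ω₁,
      IsUnit (g₁ α₁ α₁ * g₁ β₁ β₁ - g₁ α₁ β₁ * g₁ α₁ β₁) →
      SK (L.hΩ α₁) (L.hΩ β₁) = L.hF (SK₁ α₁ β₁)) ∧
    -- 2.
    (∀ (α₁ : Ω₁) (β₂ : Ω₂) (nα : R₁) (nβ : R₂),
      g₁ α₁ α₁ * nα = 1 → g₂ β₂ β₂ * nβ = 1 →
      SK (L.hΩ α₁) (L.vΩ β₂) =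
        algebraMap ℝ R 4⁻¹ *
            L.hF (g₁ (d₁ μ) α₁ * g₁ (d₁ μ) α₁ * finv * finv * nα) *
            L.vF (g₂ (J₂ β₂) (J₂ β₂) * nβ) +
          L.hF (algebraMap ℝ R₁ 4⁻¹ *
              (g₁ Jdf α₁ * g₁ Jdf α₁) * finv * finv * nα +
            algebraMap ℝ R₁ 2⁻¹ * finv * g₁ (D₁ α₁ Jdf) α₁ * nα)) ∧
    -- 3.
    (∀ (α₂ β₂ : Ω₂) (w : R₂),
      (g₂ α₂ α₂ * g₂ β₂ β₂ - g₂ α₂ β₂ * g₂ α₂ β₂) * w = 1 →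
      SK (L.vΩ α₂) (L.vΩ β₂) =
        L.hF (μ * μ * finv) * L.vF (SK₂ α₂ β₂) -
          algebraMap ℝ R 4⁻¹ * L.hF (finv * finv * g₁ (d₁ μ) (d₁ μ)) *
            L.vF (3 * (P₂ α₂ β₂ * P₂ α₂ β₂) * w) -
          algebraMap ℝ R 4⁻¹ * L.hF (finv * finv * g₁ Jdf Jdf) +
          algebraMap ℝ R 2⁻¹ * L.hF (finv * finv * g₁ (d₁ μ) Jdf) *
            L.vF (P₂ α₂ β₂ * g₂ α₂ β₂ * w)) := by
  intro Jdf
  have h2 : IsUnit (2 : R) := map_ofNat (algebraMap ℝ R) 2 ▸ (IsUnit.mk0 (2 : ℝ) two_ne_zero).map _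
  have hKhh := hPm.koszul_hΩ_hΩ hDm.koszul hD₁.koszul hspan₁
  have hKhv := hPm.koszul_hΩ_vΩ hPmb hDm.koszul hspan₁ hspan₂
  have hKvv := hPm.koszul_vΩ_vΩ hd hDm.koszul hD₂.koszul hspan₂
  have hDhh := hDm.pairing_hΩ_hΩ hD₁ hgfc hg₁ hgf hPm hPmb hKhh hKhv h2
  have hDhv := hDm.two_smul_pairing_hΩ_vΩ hd hgfc hgf hPm hPmb hfinv hJ₂ hKhh hKhv hKvv
  have hDvv := hDm.two_smul_pairing_vΩ_vΩ hD₂ hd hgfc hg₂ hgf hPm hPmb hP₁b hJ₁ hKhv hKvv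
  have hDvh := hDm.vΩ_hΩ hKhv
  refine ⟨fun α β hQ ↦ ?_, fun α β nα nβ hnα hnβ ↦ ?_, fun α β w hw ↦ ?_⟩
  · have hs := hSK (L.hΩ α) (L.hΩ β)
    rw [LinearMap.congr_fun (curv_pairing_hΩ_hΩ hDm hKhh hDhh α β β), hgf.hh, hgf.hh, hgf.hh,
      hgf.hh, ← hSK₁] at hs
    refine (hQ.map L.hF).mul_right_cancel ?_
    simpa only [map_mul, map_sub] using hs
  · exact sectional_hΩ_vΩ hgf hfinv hnα hnβ (hSK _ _) (four_mul_curv_pairing_hΩ_vΩ hDm hd hgfc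
      hgf hPm hP₁b hP₂b hg₂ hJ₁ hJ₂ hKhv hDhh hDhv hDvv α β)
  · exact sectional_vΩ_vΩ hgf hfinv hw (hSK _ _) (hSK₂ α β) (four_mul_curv_pairing_vΩ_vΩ hDm hd
      hgf hPm hPmb hfinv hg₁ hg₂ hP₁b hP₂b hJ₁ hJ₂ hKvv hDvh hDhv hDvv α β)

/-- **Corollary 5.7.** The sectional contravariant curvature
`𝒦` of `(g^f, Π^μ)` in terms of the sectional curvatures `𝒦₁`, `𝒦₂` of
`(g₁,Π₁)`, `(g₂,Π₂)`.  The sectional curvature in the direction of the plane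
spanned by `θ, η` is characterized by
`𝒦(θ,η)·(g(θ,θ)g(η,η) − g(θ,η)²) = g(ℛ(θ,η)η, θ)`; all the divisions
occurring in the formulas are encoded by the hypothesized inverses `nα`,
`nβ`, `w` and `finv`. -/
theorem warped_sectional_curvature
    {R₁ : Type*} [CommRing R₁] [Algebra ℝ R₁]
    {Ω₁ : Type*} [AddCommGroup Ω₁] [Module R₁ Ω₁]
    {R₂ : Type*} [CommRing R₂] [Algebra ℝ R₂]
    {Ω₂ : Type*} [AddCommGroup Ω₂] [Module R₂ Ω₂]
    {R : Type*} [CommRing R] [Algebra ℝ R]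
    {Ω : Type*} [AddCommGroup Ω] [Module R Ω]
    (d₁ : R₁ →+ Ω₁) (d₂ : R₂ →+ Ω₂) (d : R →+ Ω)
    (hd₁ : IsDifferential d₁) (hd₂ : IsDifferential d₂) (hd : IsDifferential d)
    (hspan₁ : Submodule.span R₁ (Set.range ⇑d₁) = ⊤)
    (hspan₂ : Submodule.span R₂ (Set.range ⇑d₂) = ⊤)
    (hspan : Submodule.span R (Set.range ⇑d) = ⊤)
    (L : ProductLift R₁ Ω₁ R₂ Ω₂ R Ω d₁ d₂ d)
    -- the cometrics and the bivector fields on the factors: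
    (g₁ : Ω₁ →ₗ[R₁] Ω₁ →ₗ[R₁] R₁) (hg₁ : IsCometric g₁)
    (g₂ : Ω₂ →ₗ[R₂] Ω₂ →ₗ[R₂] R₂) (hg₂ : IsCometric g₂)
    (P₁ : Ω₁ →ₗ[R₁] Ω₁ →ₗ[R₁] R₁) (hP₁b : IsBivector P₁)
    (P₂ : Ω₂ →ₗ[R₂] Ω₂ →ₗ[R₂] R₂) (hP₂b : IsBivector P₂)
    -- the warping functions: `f > 0` (hence invertible), `μ`:
    (f finv : R₁) (hfinv : f * finv = 1) (μ : R₁)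
    -- the contravariant warped metric and the warped bivector field:
    (gf : Ω →ₗ[R] Ω →ₗ[R] R) (hgfc : IsCometric gf)
    (hgf : IsWarpedCometric L g₁ g₂ f gf)
    (Pm : Ω →ₗ[R] Ω →ₗ[R] R) (hPmb : IsBivector Pm)
    (hPm : IsWarpedBivector L P₁ P₂ μ Pm)
    -- the Koszul brackets and the Levi-Civita contravariant connections:
    (K₁ : Ω₁ → Ω₁ → Ω₁) (K₂ : Ω₂ → Ω₂ → Ω₂) (K : Ω → Ω → Ω)
    (D₁ : Ω₁ → Ω₁ → Ω₁) (hD₁ : IsLeviCivita g₁ P₁ d₁ K₁ D₁)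
    (D₂ : Ω₂ → Ω₂ → Ω₂) (hD₂ : IsLeviCivita g₂ P₂ d₂ K₂ D₂)
    (Dm : Ω → Ω → Ω) (hDm : IsLeviCivita gf Pm d K Dm)
    -- the fields of homomorphisms `J₁`, `J₂`:
    (J₁ : Ω₁ →ₗ[R₁] Ω₁) (hJ₁ : ∀ α β : Ω₁, g₁ (J₁ α) β = P₁ α β)
    (J₂ : Ω₂ →ₗ[R₂] Ω₂) (hJ₂ : ∀ α β : Ω₂, g₂ (J₂ α) β = P₂ α β)
    -- the sectional contravariant curvatures:
    (SK : Ω → Ω → R)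
    (hSK : ∀ θ η : Ω,
      SK θ η * (gf θ θ * gf η η - gf θ η * gf θ η) = gf (curv Dm K θ η η) θ)
    (SK₁ : Ω₁ → Ω₁ → R₁)
    (hSK₁ : ∀ θ η : Ω₁,
      SK₁ θ η * (g₁ θ θ * g₁ η η - g₁ θ η * g₁ θ η) =
        g₁ (curv D₁ K₁ θ η η) θ)
    (SK₂ : Ω₂ → Ω₂ → R₂)
    (hSK₂ : ∀ θ η : Ω₂,
      SK₂ θ η * (g₂ θ θ * g₂ η η - g₂ θ η * g₂ θ η) =
        g₂ (curv D₂ K₂ θ η η) θ) :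
    let Jdf := J₁ (d₁ f)
    -- 1.
    (∀ α₁ β₁ : Ω₁,
      IsUnit (g₁ α₁ α₁ * g₁ β₁ β₁ - g₁ α₁ β₁ * g₁ α₁ β₁) →
      SK (L.hΩ α₁) (L.hΩ β₁) = L.hF (SK₁ α₁ β₁)) ∧
    -- 2.
    (∀ (α₁ : Ω₁) (β₂ : Ω₂) (nα : R₁) (nβ : R₂),
      g₁ α₁ α₁ * nα = 1 → g₂ β₂ β₂ * nβ = 1 →
      SK (L.hΩ α₁) (L.vΩ β₂) =
        algebraMap ℝ R 4⁻¹ *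
            L.hF (g₁ (d₁ μ) α₁ * g₁ (d₁ μ) α₁ * finv * finv * nα) *
            L.vF (g₂ (J₂ β₂) (J₂ β₂) * nβ) +
          L.hF (algebraMap ℝ R₁ 4⁻¹ *
              (g₁ Jdf α₁ * g₁ Jdf α₁) * finv * finv * nα +
            algebraMap ℝ R₁ 2⁻¹ * finv * g₁ (D₁ α₁ Jdf) α₁ * nα)) ∧
    -- 3.
    (∀ (α₂ β₂ : Ω₂) (w : R₂),
      (g₂ α₂ α₂ * g₂ β₂ β₂ - g₂ α₂ β₂ * g₂ α₂ β₂) * w = 1 →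
      SK (L.vΩ α₂) (L.vΩ β₂) =
        L.hF (μ * μ * finv) * L.vF (SK₂ α₂ β₂) -
          algebraMap ℝ R 4⁻¹ * L.hF (finv * finv * g₁ (d₁ μ) (d₁ μ)) *
            L.vF (3 * (P₂ α₂ β₂ * P₂ α₂ β₂) * w) -
          algebraMap ℝ R 4⁻¹ * L.hF (finv * finv * g₁ Jdf Jdf) +
          algebraMap ℝ R 2⁻¹ * L.hF (finv * finv * g₁ (d₁ μ) Jdf) *
            L.vF (P₂ α₂ β₂ * g₂ α₂ β₂ * w)) :=
  warped_sectional_curvature_general d₁ d₂ d hd hspan₁ hspan₂ L g₁ hg₁ g₂ hg₂ P₁ hP₁b P₂ hP₂b f finv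
    hfinv μ gf hgfc hgf Pm hPmb hPm K₁ K₂ K D₁ hD₁ D₂ hD₂ Dm hDm J₁ hJ₁ J₂ hJ₂ SK hSK SK₁ hSK₁ SK₂
    hSK₂

end WarpedPoissonStmt
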